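/- The potential U(z) = -(4/3)πi ∑_{ℓ=0}^{2} ω^ℓ e^{i⟨z, ω^ℓ K⟩} with K = 4π/3, ω = e^{2πi/3}, ⟨z,w⟩ = Re(z·conj(w)), satisfies the three symmetries: (i) U(z+γ) = e^{i⟨γ,K⟩}U(z) for all γ ∈ Λ = ℤ⊕ωℤ; (ii) U(ωz) = ωU(z); (iii) conj(U(z̄)) = -U(-z). -/
import Mathlib


open Complex

/-- ω = e^{2πi/3} -/
noncomputable def omega : ℂ := Complex.exp (2 * (Real.pi : ℂ) * Complex.I / 3)

/-- The lattice Λ = ℤ ⊕ ωℤ. -/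
def latticeL : Set ℂ := {γ : ℂ | ∃ m n : ℤ, γ = (m : ℂ) + (n : ℂ) * omega}

/-- K = 4π/3 (as a complex number on the real axis). -/
noncomputable def Kpt : ℂ := 4 * (Real.pi : ℂ) / 3

/-- The real inner product ⟨z,w⟩ = Re(z·conj(w)) on ℂ ≅ ℝ². -/
noncomputable def rInner (z w : ℂ) : ℝ := (z * (starRingEnd ℂ) w).re

/-- U(z) = -(4/3)πi ∑_{ℓ=0}^{2} ω^ℓ e^{i⟨z, ω^ℓ K⟩}. -/
noncomputable def Upot (z : ℂ) : ℂ :=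
  -(4 / 3 * (Real.pi : ℂ) * Complex.I) *
    ∑ l ∈ Finset.range 3, omega ^ l * Complex.exp (Complex.I * (rInner z (omega ^ l * Kpt) : ℝ))

lemma omega_eq : omega = Complex.exp (((2*Real.pi/3 : ℝ) : ℂ) * Complex.I) := by
  rw [omega]; congr 1; push_cast; ring

lemma omega_re : omega.re = -(1/2) := by
  rw [omega_eq, Complex.exp_ofReal_mul_I_re]
  have : 2*Real.pi/3 = Real.pi - Real.pi/3 := by ring
  rw [this, Real.cos_pi_sub, Real.cos_pi_div_three]

lemma omega_im : omega.im = Real.sqrt 3 / 2 := by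
  rw [omega_eq, Complex.exp_ofReal_mul_I_im]
  have : 2*Real.pi/3 = Real.pi - Real.pi/3 := by ring
  rw [this, Real.sin_pi_sub, Real.sin_pi_div_three]

lemma omega_cube : omega ^ 3 = 1 := by
  rw [omega, ← Complex.exp_nat_mul]
  rw [show ((3:ℕ):ℂ) * (2 * (Real.pi:ℂ) * Complex.I / 3) = 2*Real.pi*Complex.I by ring]
  exact Complex.exp_two_pi_mul_I

lemma sqrt3_sq : Real.sqrt 3 * Real.sqrt 3 = 3 := Real.mul_self_sqrt (by norm_num)

lemma Kpt_eq : Kpt = ((4*Real.pi/3 : ℝ) : ℂ) := by rw [Kpt]; push_cast; ring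
lemma Kpt_re : Kpt.re = 4*Real.pi/3 := by rw [Kpt_eq]; simp
lemma Kpt_im : Kpt.im = 0 := by rw [Kpt_eq]; simp

lemma omega_sq_re : (omega^2).re = -(1/2) := by
  rw [sq, Complex.mul_re, omega_re, omega_im]
  rw [show Real.sqrt 3 / 2 * (Real.sqrt 3 / 2) = Real.sqrt 3 * Real.sqrt 3 / 4 by ring, sqrt3_sq]
  norm_num

lemma omega_sq_im : (omega^2).im = -(Real.sqrt 3 / 2) := by
  rw [sq, Complex.mul_im, omega_re, omega_im]; ring

lemma rInner_eq (z w : ℂ) : rInner z w = z.re*w.re + z.im*w.im := by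
  simp only [rInner, Complex.mul_re, Complex.conj_re, Complex.conj_im]; ring

lemma rI0 (z : ℂ) : rInner z Kpt = 4*Real.pi/3 * z.re := by
  rw [rInner_eq, Kpt_re, Kpt_im]; ring

lemma rI1 (z : ℂ) : rInner z (omega*Kpt) = 2*Real.pi/3 * (-z.re + Real.sqrt 3 * z.im) := by
  rw [rInner_eq, Complex.mul_re, Complex.mul_im, Kpt_re, Kpt_im, omega_re, omega_im]; ring

lemma rI2 (z : ℂ) : rInner z (omega^2*Kpt) = 2*Real.pi/3 * (-z.re - Real.sqrt 3 * z.im) := by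
  rw [rInner_eq, Complex.mul_re, Complex.mul_im, Kpt_re, Kpt_im, omega_sq_re, omega_sq_im]; ring

noncomputable def E (t : ℝ) : ℂ := Complex.exp (Complex.I * (t : ℂ))

lemma E_add (a b : ℝ) : E (a+b) = E a * E b := by
  rw [E, E, E, ← Complex.exp_add]; congr 1; push_cast; ring

lemma E_eq {a b : ℝ} (k : ℤ) (h : a = b + 2*Real.pi*k) : E a = E b := by
  rw [h, E_add]
  have : E (2*Real.pi*k) = 1 := by
    rw [E, show Complex.I * ((2*Real.pi*(k:ℝ) : ℝ):ℂ) = (k:ℤ) * (2*Real.pi*Complex.I) by push_cast; ring]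
    exact Complex.exp_int_mul_two_pi_mul_I k
  rw [this, mul_one]

lemma E_conj (t : ℝ) : (starRingEnd ℂ) (E t) = E (-t) := by
  rw [E, E, ← Complex.exp_conj]; congr 1; simp

lemma omega_conj : (starRingEnd ℂ) omega = omega^2 := by
  apply Complex.ext
  · simp [omega_re, omega_sq_re]
  · simp [omega_im, omega_sq_im]

lemma omega_sq_conj : (starRingEnd ℂ) (omega^2) = omega := by
  rw [map_pow, omega_conj, ← pow_mul]
  rw [show (2*2 : ℕ) = 3 + 1 by norm_num, pow_succ, omega_cube, one_mul]

lemma Upot_eq (z : ℂ) : Upot z = -(4 / 3 * (Real.pi : ℂ) * Complex.I) *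
    (E (rInner z Kpt) + omega * E (rInner z (omega*Kpt)) + omega^2 * E (rInner z (omega^2*Kpt))) := by
  rw [Upot]
  rw [Finset.sum_range_succ, Finset.sum_range_succ, Finset.sum_range_one]
  simp only [pow_zero, pow_one, one_mul, E]

lemma conj_coef : (starRingEnd ℂ) (-(4 / 3 * (Real.pi : ℂ) * Complex.I)) = 4 / 3 * (Real.pi : ℂ) * Complex.I := by
  rw [map_neg, map_mul, map_mul, Complex.conj_I, map_div₀, map_ofNat, map_ofNat, Complex.conj_ofReal]
  ring

lemma E_def (t : ℝ) : Complex.exp (Complex.I * (t:ℂ)) = E t := rfl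

/-- The potential U satisfies: (i) U(z+γ) = e^{i⟨γ,K⟩}U(z) for γ ∈ Λ;
    (ii) U(ωz) = ωU(z); (iii) conj(U(z̄)) = -U(-z). -/
theorem Upot_symmetries :
    (∀ γ ∈ latticeL, ∀ z : ℂ,
      Upot (z + γ) = Complex.exp (Complex.I * (rInner γ Kpt : ℝ)) * Upot z) ∧
    (∀ z : ℂ, Upot (omega * z) = omega * Upot z) ∧
    (∀ z : ℂ, (starRingEnd ℂ) (Upot ((starRingEnd ℂ) z)) = -Upot (-z)) := by
  refine ⟨?_, ?_, ?_⟩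
  · rintro γ ⟨m, n, rfl⟩ z
    set γ : ℂ := (m : ℂ) + (n : ℂ) * omega with hγ
    rw [Upot_eq, Upot_eq, E_def]
    have e0 : E (rInner (z+γ) Kpt) = E (rInner γ Kpt) * E (rInner z Kpt) := by
      rw [← E_add]; congr 1
      rw [rI0, rI0, rI0, Complex.add_re]; ring
    have e1 : E (rInner (z+γ) (omega*Kpt)) = E (rInner γ Kpt) * E (rInner z (omega*Kpt)) := by
      rw [← E_add]
      refine E_eq (n - m) ?_
      rw [rI1, rI0, rI1]
      simp only [hγ, Complex.add_re, Complex.add_im, Complex.mul_re, Complex.mul_im,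
        Complex.intCast_re, Complex.intCast_im, omega_re, omega_im]
      push_cast
      linear_combination (Real.pi * n / 3) * sqrt3_sq
    have e2 : E (rInner (z+γ) (omega^2*Kpt)) = E (rInner γ Kpt) * E (rInner z (omega^2*Kpt)) := by
      rw [← E_add]
      refine E_eq (-m) ?_
      rw [rI2, rI0, rI2]
      simp only [hγ, Complex.add_re, Complex.add_im, Complex.mul_re, Complex.mul_im,
        Complex.intCast_re, Complex.intCast_im, omega_re, omega_im]
      push_cast
      linear_combination (-(Real.pi * n) / 3) * sqrt3_sq
    rw [e0, e1, e2]; ring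
  · intro z
    rw [Upot_eq, Upot_eq]
    have h0 : rInner (omega*z) Kpt = rInner z (omega^2*Kpt) := by
      rw [rI0, rI2, Complex.mul_re, omega_re, omega_im]; ring
    have h1 : rInner (omega*z) (omega*Kpt) = rInner z Kpt := by
      rw [rI1, rI0, Complex.mul_re, Complex.mul_im, omega_re, omega_im]
      linear_combination (2 * Real.pi / 3 * z.re / 2) * sqrt3_sq
    have h2 : rInner (omega*z) (omega^2*Kpt) = rInner z (omega*Kpt) := by
      rw [rI2, rI1, Complex.mul_re, Complex.mul_im, omega_re, omega_im]
      linear_combination (-(2 * Real.pi / 3 * z.re / 2)) * sqrt3_sq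
    rw [h0, h1, h2]
    linear_combination (4 / 3 * (Real.pi : ℂ) * Complex.I * E (rInner z (omega^2*Kpt))) * omega_cube
  · intro z
    rw [Upot_eq, Upot_eq, map_mul, conj_coef, map_add, map_add, map_mul, map_mul,
      omega_conj, omega_sq_conj, E_conj, E_conj, E_conj]
    have h0 : -(rInner ((starRingEnd ℂ) z) Kpt) = rInner (-z) Kpt := by
      rw [rI0, rI0]; simp only [Complex.conj_re, Complex.neg_re]; ring
    have h1 : -(rInner ((starRingEnd ℂ) z) (omega*Kpt)) = rInner (-z) (omega^2*Kpt) := by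
      rw [rI1, rI2]; simp only [Complex.conj_re, Complex.conj_im, Complex.neg_re, Complex.neg_im]; ring
    have h2 : -(rInner ((starRingEnd ℂ) z) (omega^2*Kpt)) = rInner (-z) (omega*Kpt) := by
      rw [rI2, rI1]; simp only [Complex.conj_re, Complex.conj_im, Complex.neg_re, Complex.neg_im]; ring
    rw [h0, h1, h2]; ring
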